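/- arXiv:2512.22806 — 3 statements merged into one kernel-verified Lean document; each statement's English description precedes it below -/
import Mathlib

section
/- Let k_x, k_z, k_1, k_3 > 0 and k_2 ≥ 0 be real constants, and define θ* := k_3/(k_1+k_3) and ε* := k_x·k_z/(k_x·k_2 + k_1·k_3). Then for every ε with 0 < ε < ε* there exists λ > 0 such that for all real a ≥ 0 and b ≥ 0: -(1-θ*)·k_x·a² + (θ*·k_1 + (1-θ*)·k_3)·a·b - θ*·(k_z/ε - k_2)·b² ≤ -λ·(a² + b²). -/
/-!
The weight `θ* = k₃/(k₁+k₃)` is the one that balances the two cross terms, `θ* k₁ = (1-θ*) k₃`,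
so the squared cross coefficient is `4 θ*(1-θ*) k₁k₃`. The discriminant condition for the form
`-(1-θ*)kₓ a² + 2θ*k₁ ab - θ*(k_z/ε - k₂) b²` to be negative definite then reduces to
`k₁k₃ < kₓ(k_z/ε - k₂)`, which is exactly `ε < ε*`. A negative definite binary form is bounded by
`-λ(a² + b²)`, with `λ = (4AC - B²)/(4(A+C))`.
-/

lemma quadratic_form_nonpos {A B C : ℝ} (hA : 0 < A) (hdisc : B ^ 2 ≤ 4 * A * C) (a b : ℝ) :
    -A * a ^ 2 + B * a * b - C * b ^ 2 ≤ 0 := by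
  have hsq : 4 * A * (-A * a ^ 2 + B * a * b - C * b ^ 2)
      = -(2 * A * a - B * b) ^ 2 - (4 * A * C - B ^ 2) * b ^ 2 := by ring
  have : 4 * A * (-A * a ^ 2 + B * a * b - C * b ^ 2) ≤ 0 := by
    rw [hsq]
    nlinarith [sq_nonneg (2 * A * a - B * b), mul_nonneg (sub_nonneg.2 hdisc) (sq_nonneg b)]
  exact nonpos_of_mul_nonpos_right this (by positivity)

lemma exists_quadratic_form_le_neg_mul_sum_sq {A B C : ℝ} (hA : 0 < A) (hdisc : B ^ 2 < 4 * A * C) :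
    ∃ lam > (0 : ℝ), ∀ a b : ℝ,
      -A * a ^ 2 + B * a * b - C * b ^ 2 ≤ -lam * (a ^ 2 + b ^ 2) := by
  have hC : 0 < C := by nlinarith [sq_nonneg B]
  set lam := (4 * A * C - B ^ 2) / (4 * (A + C))
  have hlam : lam * (4 * (A + C)) = 4 * A * C - B ^ 2 := div_mul_cancel₀ _ (by positivity)
  have hlam_pos : 0 < lam := div_pos (by linarith) (by positivity)
  have hA_sub : 0 < A - lam := by nlinarith [sq_nonneg B]
  -- `λ` is chosen so that the discriminant of the shifted form is `-4λ² ≤ 0`.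
  have hdisc_sub : B ^ 2 ≤ 4 * (A - lam) * (C - lam) := by nlinarith [sq_nonneg lam]
  refine ⟨lam, hlam_pos, fun a b => ?_⟩
  linarith [quadratic_form_nonpos hA_sub hdisc_sub a b]

lemma one_sub_div_add_right {a b : ℝ} (h : a + b ≠ 0) : 1 - b / (a + b) = a / (a + b) := by
  rw [one_sub_div h, add_sub_cancel_right]

lemma div_add_mul_eq_one_sub_mul {a b : ℝ} (h : a + b ≠ 0) :
    b / (a + b) * a = (1 - b / (a + b)) * b := by
  rw [one_sub_div_add_right h]
  ring

lemma lt_div_sub_of_lt_div_add {p q r ε : ℝ} (hε : 0 < ε) (hqr : 0 < q + r)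
    (h : ε < p / (q + r)) : r < p / ε - q := by
  have h' : ε * (q + r) < p := (lt_div_iff₀ hqr).mp h
  have : q + r < p / ε := by
    rw [lt_div_iff₀ hε]
    linarith
  linarith

theorem stmt0_general (kx kz k1 k2 k3 : ℝ) (hkx : 0 < kx) (hk1 : 0 < k1)
    (hk3 : 0 < k3) (hk2 : 0 ≤ k2) :
    ∀ ε : ℝ, 0 < ε → ε < kx * kz / (kx * k2 + k1 * k3) →
      ∃ lam > (0 : ℝ), ∀ a b : ℝ, 0 ≤ a → 0 ≤ b →
        -(1 - k3 / (k1 + k3)) * kx * a ^ 2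
          + ((k3 / (k1 + k3)) * k1 + (1 - k3 / (k1 + k3)) * k3) * a * b
          - (k3 / (k1 + k3)) * (kz / ε - k2) * b ^ 2
        ≤ -lam * (a ^ 2 + b ^ 2) := by
  intro ε hε hlt
  have hsum : k1 + k3 ≠ 0 := by positivity
  set θ := k3 / (k1 + k3)
  have hθ : 0 < θ := by positivity
  have hθ' : 0 < 1 - θ := by rw [one_sub_div_add_right hsum]; positivity
  have hbal : θ * k1 = (1 - θ) * k3 := div_add_mul_eq_one_sub_mul hsum
  have hgap : k1 * k3 < kx * (kz / ε - k2) := by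
    have := lt_div_sub_of_lt_div_add hε (by positivity) hlt
    rwa [mul_sub, ← mul_div_assoc]
  have hdisc : (θ * k1 + (1 - θ) * k3) ^ 2 < 4 * ((1 - θ) * kx) * (θ * (kz / ε - k2)) :=
    calc (θ * k1 + (1 - θ) * k3) ^ 2 = 4 * (θ * (1 - θ)) * (k1 * k3) := by
          linear_combination (θ * k1 - (1 - θ) * k3) * hbal
      _ < 4 * (θ * (1 - θ)) * (kx * (kz / ε - k2)) :=
          mul_lt_mul_of_pos_left hgap (mul_pos four_pos (mul_pos hθ hθ'))
      _ = 4 * ((1 - θ) * kx) * (θ * (kz / ε - k2)) := by ring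
  obtain ⟨lam, hlam, hbound⟩ := exists_quadratic_form_le_neg_mul_sum_sq (mul_pos hθ' hkx) hdisc
  exact ⟨lam, hlam, fun a b _ _ => by linarith [hbound a b]⟩

/-- Completing-the-square estimate for the composite Lyapunov–Foster function:
with `θ* = k₃/(k₁+k₃)` and `ε* = kₓ·k_z/(kₓ·k₂ + k₁·k₃)`, for every `0 < ε < ε*` there is
`λ > 0` so that the quadratic form in `(a, b)` is bounded by `-λ(a² + b²)`. -/
theorem stmt0 (kx kz k1 k2 k3 : ℝ) (hkx : 0 < kx) (hkz : 0 < kz) (hk1 : 0 < k1)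
    (hk3 : 0 < k3) (hk2 : 0 ≤ k2) :
    ∀ ε : ℝ, 0 < ε → ε < kx * kz / (kx * k2 + k1 * k3) →
      ∃ lam > (0 : ℝ), ∀ a b : ℝ, 0 ≤ a → 0 ≤ b →
        -(1 - k3 / (k1 + k3)) * kx * a ^ 2
          + ((k3 / (k1 + k3)) * k1 + (1 - k3 / (k1 + k3)) * k3) * a * b
          - (k3 / (k1 + k3)) * (kz / ε - k2) * b ^ 2
        ≤ -lam * (a ^ 2 + b ^ 2) :=
  stmt0_general kx kz k1 k2 k3 hkx hk1 hk3 hk2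
end

section
/- Let A₁ = [[-1, 3], [0, -1]] and A₂ = [[-1, 0], [-3, -1]] be real 2×2 matrices. Then there is no real symmetric positive definite 2×2 matrix P such that both A₁ᵀP + PA₁ and A₂ᵀP + PA₂ are negative definite. -/
open Matrix

/-- Example 2: the Hurwitz matrices `A₁ = [[-1,3],[0,-1]]` and `A₂ = [[-1,0],[-3,-1]]` admit no
common quadratic Lyapunov function: there is no symmetric positive definite `P` with both
`A₁ᵀP + PA₁` and `A₂ᵀP + PA₂` negative definite. -/
theorem stmt8 :
    ¬ ∃ P : Matrix (Fin 2) (Fin 2) ℝ, P.PosDef ∧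
      (∀ x : Fin 2 → ℝ, x ≠ 0 →
        x ⬝ᵥ (((!![(-1 : ℝ), 3; 0, -1])ᵀ * P + P * !![(-1 : ℝ), 3; 0, -1]).mulVec x) < 0) ∧
      (∀ x : Fin 2 → ℝ, x ≠ 0 →
        x ⬝ᵥ (((!![(-1 : ℝ), 0; -3, -1])ᵀ * P + P * !![(-1 : ℝ), 0; -3, -1]).mulVec x) < 0) := by
  rintro ⟨P, hP, h1, h2⟩
  set t : ℝ := (Real.sqrt 5 - 3) / 2 with ht_def
  have h5 : Real.sqrt 5 ^ 2 = 5 := Real.sq_sqrt (by norm_num)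
  have ht : t ^ 2 + 3 * t + 1 = 0 := by
    simp only [ht_def]; ring_nf; nlinarith [h5]
  have hsym : P 1 0 = P 0 1 := by
    have := hP.isHermitian
    have := congrArg (fun M => M 1 0) this.eq
    simpa [Matrix.conjTranspose_apply] using this.symm
  have hx : (![-t, 1] : Fin 2 → ℝ) ≠ 0 := by
    intro h
    have := congrFun h 1
    simp at this
  have hy : (![1, t] : Fin 2 → ℝ) ≠ 0 := by
    intro h
    have := congrFun h 0
    simp at this
  have H1 := h1 ![-t, 1] hx
  have H2 := h2 ![1, t] hy
  simp only [dotProduct, Matrix.mulVec, Fin.sum_univ_two, Matrix.add_apply,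
    Matrix.mul_apply, Matrix.transpose_apply, Matrix.cons_val_zero, Matrix.cons_val_one,
    Matrix.head_cons, Matrix.cons_val', Matrix.empty_val', Matrix.cons_val_fin_one,
    Matrix.of_apply] at H1 H2
  norm_num at H1 H2
  have key : (P 0 0 + P 1 1) * (t ^ 2 + 3 * t + 1) = 0 := by rw [ht]; ring
  rw [hsym] at H1 H2
  nlinarith [H1, H2, key]
end

section
/- For all real numbers x and z such that |x| ≥ 1 or |z + x| ≥ 1, the following inequality holds: (1/4)·(x² + (z+x)²) - (3/80)·(max(x+1, 0))² - (17/80)·(max(x-1, 0))² ≥ 1/10. -/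
/-- Example 1: outside the recurrent set `{|x| < 1 and |z+x| < 1}`, the function
`ρ̃(x,z) = (1/4)(x² + (z+x)²) - (3/80)max(x+1,0)² - (17/80)max(x-1,0)²` is at least `1/10`. -/
theorem stmt9 (x z : ℝ) (h : 1 ≤ |x| ∨ 1 ≤ |z + x|) :
    (1 / 10 : ℝ) ≤ (1 / 4) * (x ^ 2 + (z + x) ^ 2)
      - (3 / 80) * (max (x + 1) 0) ^ 2 - (17 / 80) * (max (x - 1) 0) ^ 2 := by
  have h' : 1 ≤ x ^ 2 ∨ 1 ≤ (z + x) ^ 2 := by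
    rcases h with h | h
    · left; nlinarith [sq_abs x, abs_nonneg x]
    · right; nlinarith [sq_abs (z + x), abs_nonneg (z + x)]
  rcases le_or_gt (x + 1) 0 with h1 | h1
  · rw [max_eq_right h1, max_eq_right (by linarith : x - 1 ≤ 0)]
    nlinarith [sq_nonneg (z + x), sq_nonneg x]
  · rw [max_eq_left h1.le]
    rcases le_or_gt (x - 1) 0 with h2 | h2
    · rw [max_eq_right h2]
      rcases h' with h' | h' <;>
        nlinarith [sq_nonneg (z + x), sq_nonneg (17 * x - 3), sq_nonneg (x - 1)]
    · rw [max_eq_left h2.le]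
      nlinarith [sq_nonneg (z + x)]
end
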